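/- arXiv:1903.03147 — 7 statements merged into one kernel-verified Lean document; each statement's English description precedes it below -/
import Mathlib

section
/- Let α ∈ (0,1] and t ≥ 2 be real numbers, and let S : ℝ → ℝ be any function such that S(x) ≤ 2·x^(1+α) for all 1 ≤ x ≤ t, and S(x) ≤ 2·x^(1+α) + (1/4)·(x^(1/2) + x^((1+α)/2))·S(x^(1/2)) for all x > t. Then S(x) ≤ 4·x^(1+α) for all x ≥ 1. -/
/-!
Writing `y = √x`, the recursion bounds `S x` by `2 x^(1+α) + (1/4)(y + y^(1+α)) S y`.
If `S y ≤ 4 y^(1+α)`, the second term is `y·y^(1+α) + y^(2(1+α)) ≤ 2 x^(1+α)`, because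
`y ≤ y^(1+α)` for `y ≥ 1` and `α ≥ 0`; so the bound `4 x^(1+α)` propagates from `√x` to `x`.
On `[1, t]` the base case gives it directly, hence by induction it holds on every `[1, t^(2^n)]`,
and these intervals exhaust `[1, ∞)` since `t > 1`.
-/

open Real

lemma rpow_eq_sqrt_rpow_sq {x : ℝ} (hx : 0 ≤ x) (a : ℝ) : x ^ a = (√x ^ a) ^ 2 := by
  rw [← rpow_div_two_eq_sqrt a hx, ← rpow_mul_natCast hx]
  ring_nf

lemma sqrt_le_of_le_pow_two_pow_succ {x t : ℝ} {n : ℕ} (ht : 0 ≤ t) (hx : x ≤ t ^ 2 ^ (n + 1)) :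
    √x ≤ t ^ 2 ^ n :=
  sqrt_le_iff.mpr ⟨by positivity, by rwa [← pow_mul, ← pow_succ]⟩

lemma exists_le_pow_two_pow {t : ℝ} (ht : 1 < t) (x : ℝ) : ∃ n : ℕ, x ≤ t ^ 2 ^ n := by
  obtain ⟨n, hn⟩ := pow_unbounded_of_one_lt x ht
  exact ⟨n, hn.le.trans (pow_le_pow_right₀ ht.le (Nat.lt_two_pow_self).le)⟩

section

variable {α t : ℝ} {S : ℝ → ℝ}

lemma le_four_rpow_of_sqrt {x : ℝ} (hα : 0 ≤ α) (hx : 1 ≤ x)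
    (hrec : S x ≤ 2 * x ^ (1 + α) +
      (1 / 4) * (x ^ ((1 : ℝ) / 2) + x ^ ((1 + α) / 2)) * S (x ^ ((1 : ℝ) / 2)))
    (hsqrt : S √x ≤ 4 * √x ^ (1 + α)) :
    S x ≤ 4 * x ^ (1 + α) := by
  have hx₀ : 0 ≤ x := zero_le_one.trans hx
  rw [← sqrt_eq_rpow, rpow_div_two_eq_sqrt _ hx₀, rpow_eq_sqrt_rpow_sq hx₀] at hrec
  rw [rpow_eq_sqrt_rpow_sq hx₀]
  set y := √x
  set u := y ^ (1 + α)
  have hy : 1 ≤ y := one_le_sqrt.mpr hx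
  have hyu : y ≤ u := self_le_rpow_of_one_le hy (by linarith)
  have hmul : (1 / 4) * (y + u) * S y ≤ (1 / 4) * (y + u) * (4 * u) :=
    mul_le_mul_of_nonneg_left hsqrt (by positivity)
  have hyu' : y * u ≤ u * u := mul_le_mul_of_nonneg_right hyu (by positivity)
  linarith

lemma le_four_rpow_of_le_pow_two_pow (hα : 0 ≤ α) (ht : 0 ≤ t)
    (hbase : ∀ x : ℝ, 1 ≤ x → x ≤ t → S x ≤ 2 * x ^ (1 + α))
    (hrec : ∀ x : ℝ, t < x →
      S x ≤ 2 * x ^ (1 + α) +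
        (1 / 4) * (x ^ ((1 : ℝ) / 2) + x ^ ((1 + α) / 2)) * S (x ^ ((1 : ℝ) / 2)))
    (n : ℕ) : ∀ x : ℝ, 1 ≤ x → x ≤ t ^ 2 ^ n → S x ≤ 4 * x ^ (1 + α) := by
  induction n with
  | zero =>
    intro x hx hxt
    have := hbase x hx (by simpa using hxt)
    have : 0 ≤ x ^ (1 + α) := by positivity
    linarith
  | succ n ih =>
    intro x hx hxt
    rcases le_or_gt x t with hle | hgt
    · have := hbase x hx hle
      have : 0 ≤ x ^ (1 + α) := by positivity
      linarith
    · exact le_four_rpow_of_sqrt hα hx (hrec x hgt)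
        (ih _ (one_le_sqrt.mpr hx) (sqrt_le_of_le_pow_two_pow_succ ht hxt))

end

theorem stmt_2_general (α t : ℝ) (hα₀ : 0 < α) (ht : 2 ≤ t) (S : ℝ → ℝ)
    (hbase : ∀ x : ℝ, 1 ≤ x → x ≤ t → S x ≤ 2 * x ^ (1 + α))
    (hrec : ∀ x : ℝ, t < x →
      S x ≤ 2 * x ^ (1 + α) +
        (1 / 4) * (x ^ ((1 : ℝ) / 2) + x ^ ((1 + α) / 2)) * S (x ^ ((1 : ℝ) / 2))) :
    ∀ x : ℝ, 1 ≤ x → S x ≤ 4 * x ^ (1 + α) := by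
  intro x hx
  obtain ⟨n, hn⟩ := exists_le_pow_two_pow (by linarith : 1 < t) x
  exact le_four_rpow_of_le_pow_two_pow hα₀.le (by linarith) hbase hrec n x hx hn

/-- Space-bound claim of Lemma 3 (lem:card): if `S` satisfies
`S(x) ≤ 2·x^(1+α)` for `1 ≤ x ≤ t` and
`S(x) ≤ 2·x^(1+α) + (1/4)·(x^(1/2) + x^((1+α)/2))·S(x^(1/2))` for `x > t`,
then `S(x) ≤ 4·x^(1+α)` for all `x ≥ 1`. -/
theorem stmt_2 (α t : ℝ) (hα₀ : 0 < α) (hα₁ : α ≤ 1) (ht : 2 ≤ t) (S : ℝ → ℝ)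
    (hbase : ∀ x : ℝ, 1 ≤ x → x ≤ t → S x ≤ 2 * x ^ (1 + α))
    (hrec : ∀ x : ℝ, t < x →
      S x ≤ 2 * x ^ (1 + α) +
        (1 / 4) * (x ^ ((1 : ℝ) / 2) + x ^ ((1 + α) / 2)) * S (x ^ ((1 : ℝ) / 2))) :
    ∀ x : ℝ, 1 ≤ x → S x ≤ 4 * x ^ (1 + α) :=
  stmt_2_general α t hα₀ ht S hbase hrec
end

section
/- For all reals 0 ≤ f₁ ≤ f₂, the front-buffer potential satisfies Φ_f(f₂, s, w) − Φ_f(f₁, s, w) ≤ (c₀/B)·w·(f₂ − f₁). In particular, adding k ≥ 0 elements to a front buffer increases its potential by at most (c₀/B)·w·k. -/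
/-- The front-buffer potential of the x-treap analysis: for a front buffer of size `s`
at level weight `w` holding `f` elements. -/
noncomputable def phiF (c₀ B μ s w f : ℝ) : ℝ :=
  if f < s / 4 then (c₀ / B) * μ * (s / 4 - f) * w
  else if f ≤ s / 3 then 0
  else (c₀ / B) * (f - s / 3) * w

/-- Adding elements to a front buffer increases its potential by at most
`(c₀/B)·w` per element: for `0 ≤ f₁ ≤ f₂`,
`Φ_f(f₂) − Φ_f(f₁) ≤ (c₀/B)·w·(f₂ − f₁)`. -/
theorem stmt_4 (c₀ B μ s w : ℝ) (hc₀ : 0 < c₀) (hB : 0 < B) (hμ : 1 ≤ μ)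
    (hs : 0 < s) (hw : 0 ≤ w) (f₁ f₂ : ℝ) (hf₁ : 0 ≤ f₁) (hf₁₂ : f₁ ≤ f₂) :
    phiF c₀ B μ s w f₂ - phiF c₀ B μ s w f₁ ≤ (c₀ / B) * w * (f₂ - f₁) := by
  have hcB : 0 ≤ c₀ / B := le_of_lt (div_pos hc₀ hB)
  unfold phiF
  split_ifs with h1 h2 h3 h3 h4 h5 <;>
    nlinarith [mul_nonneg hcB hw, mul_nonneg (mul_nonneg hcB hw) hs.le,
      mul_le_mul_of_nonneg_right (mul_le_mul_of_nonneg_left hμ hcB) hw,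
      mul_nonneg (mul_nonneg (mul_nonneg hcB (le_trans zero_le_one hμ)) hw) (sub_nonneg.mpr hf₁₂)]
end

section
/- Let f ≥ 0 and 0 ≤ k ≤ r be reals. Moving k elements from the rear buffer to the front buffer of the same x-treap buffer changes the total potential by (Φ_f(f + k, s, w) − Φ_f(f, s, w)) + (Φ_r(r − k, s, w) − Φ_r(r, s, w)) ≤ −(c₀/B)·k·w ≤ 0. Hence operation Resolve never increases the potential of the buffer it operates on. -/
/-- The rear-buffer potential of the x-treap analysis. -/
noncomputable def phiR (c₀ B s w r : ℝ) : ℝ :=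
  2 * (c₀ / B) * (r - s / 2) * w

/-- Lemma 5 (lem:res): moving `k` elements from the rear buffer to the front buffer
of the same x-treap buffer changes the total potential by at most `−(c₀/B)·k·w ≤ 0`;
hence `Resolve` never increases the potential of the buffer it operates on. -/
theorem stmt_6 (c₀ B μ s w : ℝ) (hc₀ : 0 < c₀) (hB : 0 < B) (hμ : 1 ≤ μ)
    (hs : 0 < s) (hw : 0 ≤ w) (f k r : ℝ) (hf : 0 ≤ f) (hk : 0 ≤ k) (hkr : k ≤ r) :
    (phiF c₀ B μ s w (f + k) - phiF c₀ B μ s w f) +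
      (phiR c₀ B s w (r - k) - phiR c₀ B s w r) ≤ -((c₀ / B) * k * w) ∧
    -((c₀ / B) * k * w) ≤ 0 := by
  have hC : 0 < c₀ / B := div_pos hc₀ hB
  refine ⟨?_, neg_nonpos.mpr (by positivity)⟩
  simp only [phiF, phiR]
  split_ifs with h1 h2 h3 h4 <;> nlinarith [mul_nonneg hC.le hw, mul_nonneg (mul_nonneg hC.le hk) hw, mul_nonneg (mul_nonneg (mul_nonneg hC.le (by linarith : (0:ℝ) ≤ μ - 1)) hk) hw]
end

section
/- Let s, s' > 0 be buffer sizes, w ≥ 0 a weight, and let k ≥ 0, f, f' ≥ 0 be reals with f − k ≥ s/3. Moving k elements from a front buffer of size s at weight w + 1 (holding f elements) to a front buffer of size s' at weight w (holding f' elements) changes the total front potential by (Φ_f(f − k, s, w+1) − Φ_f(f, s, w+1)) + (Φ_f(f' + k, s', w) − Φ_f(f', s', w)) ≤ −(c₀/B)·k ≤ 0. -/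
set_option maxHeartbeats 1000000


lemma phiF_high (c₀ B μ s w x : ℝ) (hs : 0 < s) (hx : s / 3 ≤ x) :
    phiF c₀ B μ s w x = (c₀ / B) * (x - s / 3) * w := by
  unfold phiF
  rw [if_neg (by linarith)]
  split_ifs with h
  · have hx3 : x = s / 3 := le_antisymm h hx
    rw [hx3]; ring
  · rfl

lemma phiF_src (c₀ B μ s w k f : ℝ) (hs : 0 < s) (hk : 0 ≤ k)
    (hfk : s / 3 ≤ f - k) :
    phiF c₀ B μ s w (f - k) - phiF c₀ B μ s w f = -((c₀ / B) * k * w) := by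
  rw [phiF_high c₀ B μ s w (f - k) hs hfk, phiF_high c₀ B μ s w f hs (by linarith)]
  ring

lemma phiF_tgt (c₀ B μ s w k f : ℝ) (hc₀ : 0 < c₀) (hB : 0 < B) (hμ : 1 ≤ μ)
    (hs : 0 < s) (hw : 0 ≤ w) (hk : 0 ≤ k) :
    phiF c₀ B μ s w (f + k) - phiF c₀ B μ s w f ≤ (c₀ / B) * k * w := by
  have hcB : 0 ≤ c₀ / B := le_of_lt (div_pos hc₀ hB)
  have hμ0 : (0:ℝ) ≤ μ := by linarith
  have hkw : 0 ≤ (c₀ / B) * k * w := mul_nonneg (mul_nonneg hcB hk) hw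
  unfold phiF
  split_ifs with h1 h2 h3 h4 h5 h6 h7 h8
  · nlinarith [mul_nonneg (mul_nonneg (mul_nonneg hcB hμ0) hk) hw]
  · linarith
  · linarith
  · nlinarith [mul_nonneg (mul_nonneg (mul_nonneg hcB hμ0)
      (by linarith : (0:ℝ) ≤ s / 4 - f)) hw]
  · linarith
  · linarith
  · nlinarith [mul_nonneg (mul_nonneg (mul_nonneg hcB hμ0)
      (by linarith : (0:ℝ) ≤ s / 4 - f)) hw,
      mul_nonneg (mul_nonneg hcB (by linarith : (0:ℝ) ≤ s / 3 - f)) hw]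
  · nlinarith [mul_nonneg (mul_nonneg hcB (by linarith : (0:ℝ) ≤ s / 3 - f)) hw]
  · exact le_of_eq (by ring)

/-- Front-buffer case of Step 1.2.2 of Batched-Insert (Lemma 6, lem:bins): moving `k`
elements from a front buffer of size `s` at weight `w + 1` (holding `f` elements,
staying at least a third full) to a front buffer of size `s'` at weight `w` changes the
total front potential by at most `−(c₀/B)·k ≤ 0`. -/
theorem stmt_8 (c₀ B μ s s' w : ℝ) (hc₀ : 0 < c₀) (hB : 0 < B) (hμ : 1 ≤ μ)
    (hs : 0 < s) (hs' : 0 < s') (hw : 0 ≤ w)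
    (k f f' : ℝ) (hk : 0 ≤ k) (hf : 0 ≤ f) (hf' : 0 ≤ f') (hfk : s / 3 ≤ f - k) :
    (phiF c₀ B μ s (w + 1) (f - k) - phiF c₀ B μ s (w + 1) f) +
      (phiF c₀ B μ s' w (f' + k) - phiF c₀ B μ s' w f') ≤ -((c₀ / B) * k) ∧
    -((c₀ / B) * k) ≤ 0 := by
  have hcB : 0 ≤ c₀ / B := le_of_lt (div_pos hc₀ hB)
  have h1 := phiF_src c₀ B μ s (w + 1) k f hs hk hfk
  have h2 := phiF_tgt c₀ B μ s' w k f' hc₀ hB hμ hs' hw hk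
  constructor
  · rw [h1]; nlinarith [mul_nonneg hcB hk]
  · linarith [mul_nonneg hcB hk]
end

section
/- Let s > 0 be a buffer size and w ≥ 0 a weight. The total potential change of operation Split, which takes a full buffer (front holding s/2 and rear holding s/2 elements) and an empty buffer (front and rear holding 0 elements) of the same size s and weight w and leaves both half-full (front holding s/4 and rear holding s/4 elements each), equals (Φ_f(s/4, s, w) − Φ_f(s/2, s, w)) + (Φ_f(s/4, s, w) − Φ_f(0, s, w)) + (Φ_r(s/4, s, w) − Φ_r(s/2, s, w)) + (Φ_r(s/4, s, w) − Φ_r(0, s, w)) = −(c₀/B)·w·(s/6 + μ·s/4), which is ≤ 0. -/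
/-- Step 1.2.3 of Batched-Insert (Lemma 6, lem:bins): operation Split takes a full
buffer (front and rear holding `s/2` each) and an empty buffer of the same size `s`
and weight `w`, and leaves both half-full (front and rear holding `s/4` each);
the total potential change equals `−(c₀/B)·w·(s/6 + μ·s/4) ≤ 0`. -/
theorem stmt_9 (c₀ B μ s w : ℝ) (hc₀ : 0 < c₀) (hB : 0 < B) (hμ : 1 ≤ μ)
    (hs : 0 < s) (hw : 0 ≤ w) :
    (phiF c₀ B μ s w (s / 4) - phiF c₀ B μ s w (s / 2)) +
      (phiF c₀ B μ s w (s / 4) - phiF c₀ B μ s w 0) +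
      (phiR c₀ B s w (s / 4) - phiR c₀ B s w (s / 2)) +
      (phiR c₀ B s w (s / 4) - phiR c₀ B s w 0)
      = -((c₀ / B) * w * (s / 6 + μ * s / 4)) ∧
    -((c₀ / B) * w * (s / 6 + μ * s / 4)) ≤ 0 := by
  constructor
  · simp only [phiF, phiR]
    rw [if_neg (by linarith), if_pos (by linarith), if_neg (by linarith),
      if_neg (by linarith), if_pos (by linarith)]
    ring
  · have h1 : 0 ≤ c₀ / B := by positivity
    have h2 : 0 ≤ s / 6 + μ * s / 4 := by nlinarith
    nlinarith [mul_nonneg (mul_nonneg h1 hw) h2]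
end

section
/- Let s, s' > 0 be buffer sizes, w ≥ 0 a weight, and let k, f be reals with 0 ≤ k ≤ f ≤ s/4 and k ≤ s'/4. Moving k elements from a front buffer of size s at weight w (holding f ≤ s/4 elements) to an empty front buffer of size s' at weight w + 2 changes the total front potential by exactly (Φ_f(f − k, s, w) − Φ_f(f, s, w)) + (Φ_f(k, s', w+2) − Φ_f(0, s', w+2)) = −2·(c₀/B)·μ·k, which is ≤ 0. -/
lemma phiF_of_le (c₀ B μ s w f : ℝ) (hs : 0 < s) (hf : f ≤ s / 4) :
    phiF c₀ B μ s w f = (c₀ / B) * μ * (s / 4 - f) * w := by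
  unfold phiF
  split_ifs with h1 h2
  · rfl
  · have : f = s / 4 := le_antisymm hf (not_lt.1 h1)
    rw [this]; ring
  · exfalso; apply h2; linarith

/-- Flush-Up potential change (Lemma 7, lem:bext): moving `k` elements from a front
buffer of size `s` at weight `w` (holding `f ≤ s/4` elements) to an empty front buffer
of size `s'` at weight `w + 2` changes the total front potential by exactly
`−2·(c₀/B)·μ·k ≤ 0`. -/
theorem stmt_10 (c₀ B μ s s' w : ℝ) (hc₀ : 0 < c₀) (hB : 0 < B) (hμ : 1 ≤ μ)
    (hs : 0 < s) (hs' : 0 < s') (hw : 0 ≤ w)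
    (k f : ℝ) (hk : 0 ≤ k) (hkf : k ≤ f) (hf : f ≤ s / 4) (hks' : k ≤ s' / 4) :
    (phiF c₀ B μ s w (f - k) - phiF c₀ B μ s w f) +
      (phiF c₀ B μ s' (w + 2) k - phiF c₀ B μ s' (w + 2) 0)
      = -(2 * (c₀ / B) * μ * k) ∧
    -(2 * (c₀ / B) * μ * k) ≤ 0 := by
  have hcB : 0 ≤ c₀ / B := le_of_lt (div_pos hc₀ hB)
  constructor
  · rw [phiF_of_le c₀ B μ s w (f - k) hs (by linarith),
      phiF_of_le c₀ B μ s w f hs hf,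
      phiF_of_le c₀ B μ s' (w + 2) k hs' hks',
      phiF_of_le c₀ B μ s' (w + 2) 0 hs' (by linarith)]
    ring
  · nlinarith [mul_nonneg hcB hk]
end

section
/- Let α ∈ (0,1], let B ≥ 1 and λ ≥ 2B be reals, let N ≥ 2 be a real number, and let m be a natural number with (1+α)^m ≤ log₂ N. Then the sum from i = 0 to m of ((1+α)/B) · log₂(2^((1+α)^i)/B) / log₂(λ/B) is at most ((1+α)²/α) · (log₂ N / log₂(λ/B)) / B. -/
/-! Since `B ≥ 1`, the `i`-th term is at most `(1+α)^i · (1+α) / (B · log₂(λ/B))`, so the sum is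
dominated by a geometric series of ratio `1+α`. That series is at most `(1+α)/α` times its last
term `(1+α)^m ≤ log₂ N`. -/

theorem Real.logb_two_rpow_div_le (x : ℝ) {B : ℝ} (hB : 1 ≤ B) :
    Real.logb 2 ((2 : ℝ) ^ x / B) ≤ x := by
  rw [Real.logb_div (by positivity) (by positivity), Real.logb_rpow (by norm_num) (by norm_num)]
  linarith [Real.logb_nonneg (b := 2) (by norm_num) hB]

theorem geom_sum_range_succ_le_div {q : ℝ} (hq : 1 < q) (m : ℕ) :
    ∑ i ∈ Finset.range (m + 1), q ^ i ≤ q / (q - 1) * q ^ m := by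
  have hq' : 0 < q - 1 := by linarith
  rw [geom_sum_eq hq.ne', div_mul_eq_mul_div, pow_succ']
  gcongr
  linarith

theorem stmt_12_general (α B lam N : ℝ) (hα₀ : 0 < α) (hB : 1 ≤ B)
    (hlam : 2 * B ≤ lam) (m : ℕ)
    (h : (1 + α) ^ m ≤ Real.logb 2 N) :
    ∑ i ∈ Finset.range (m + 1),
        ((1 + α) / B) * Real.logb 2 ((2 : ℝ) ^ ((1 + α) ^ i) / B) /
          Real.logb 2 (lam / B)
      ≤ ((1 + α) ^ 2 / α) * (Real.logb 2 N / Real.logb 2 (lam / B)) / B := by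
  have hB₀ : 0 < B := by linarith
  have hL : 0 < Real.logb 2 (lam / B) :=
    Real.logb_pos (by norm_num) ((lt_div_iff₀ hB₀).mpr (by linarith))
  set c := (1 + α) / B / Real.logb 2 (lam / B)
  have hc : 0 ≤ c := by positivity
  calc ∑ i ∈ Finset.range (m + 1),
          ((1 + α) / B) * Real.logb 2 ((2 : ℝ) ^ ((1 + α) ^ i) / B) / Real.logb 2 (lam / B)
      ≤ ∑ i ∈ Finset.range (m + 1), c * (1 + α) ^ i := by
        gcongr with i
        rw [mul_div_right_comm]
        exact mul_le_mul_of_nonneg_left (Real.logb_two_rpow_div_le _ hB) hc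
    _ = c * ∑ i ∈ Finset.range (m + 1), (1 + α) ^ i := (Finset.mul_sum ..).symm
    _ ≤ c * ((1 + α) / α * (1 + α) ^ m) := by
        gcongr
        simpa using geom_sum_range_succ_le_div (by linarith : 1 < 1 + α) m
    _ ≤ c * ((1 + α) / α * Real.logb 2 N) := by gcongr
    _ = ((1 + α) ^ 2 / α) * (Real.logb 2 N / Real.logb 2 (lam / B)) / B := by
        simp only [c]
        field_simp

/-- Update-potential sum from the proof of Theorem 2 (thm:pq): the total update
potential `∑_{i=0}^{m} ((1+α)/B) · log_{λ/B}(2^((1+α)^i)/B)` charged to one Update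
operation is at most `((1+α)²/α) · log_{λ/B}(N) / B`, where
`log_{λ/B} y = log₂ y / log₂(λ/B)`. -/
theorem stmt_12 (α B lam N : ℝ) (hα₀ : 0 < α) (hα₁ : α ≤ 1) (hB : 1 ≤ B)
    (hlam : 2 * B ≤ lam) (hN : 2 ≤ N) (m : ℕ)
    (h : (1 + α) ^ m ≤ Real.logb 2 N) :
    ∑ i ∈ Finset.range (m + 1),
        ((1 + α) / B) * Real.logb 2 ((2 : ℝ) ^ ((1 + α) ^ i) / B) /
          Real.logb 2 (lam / B)
      ≤ ((1 + α) ^ 2 / α) * (Real.logb 2 N / Real.logb 2 (lam / B)) / B :=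
  stmt_12_general α B lam N hα₀ hB hlam m h
end
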